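/- arXiv:1305.1518 — 3 statements merged into one kernel-verified Lean document; each statement's English description precedes it below -/
import Mathlib

section
/- Let 𝔤 be an algebraic Lie algebra, 𝔧 a Cartan–Duflo subalgebra of 𝔤, and g ∈ 𝔤*^𝔧 a strongly regular form on 𝔤 fixed by 𝔧 that is stable as a form on the centralizer 𝔤^𝔧. Then 𝔤(g) ∩ [𝔤, 𝔤(g)] = 𝔤(g) ∩ [𝔤^𝔧, 𝔤(g)], and hence g is stable as a form on 𝔤. -/
/-!
A regular form `g` has commutative stabilizer (Duflo–Vergne): the rank of `X ↦ g ⁅X, ·⁆` cannot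
grow along a line `g + t • h`, which forces `h ⁅x, ·⁆` into its range for `x ∈ 𝔤(g)`; evaluating
at `y ∈ 𝔤(g)` gives `h ⁅x, y⁆ = 0` for every `h`. Hence `𝔧 ⊆ 𝔤(g) ⊆ 𝔤^𝔧`, and `𝔧` is spanned by
finitely many commuting `ad`-semisimple elements. The projection `P` of `𝔤` onto `𝔤^𝔧` along
`[𝔧, 𝔤]` is built from the Fitting decompositions `ker ⊕ range` of these elements, so it commutes
with `ad y` for `y ∈ 𝔤(g)`, i.e. `P ⁅x, y⁆ = ⁅P x, y⁆`. For `z ∈ 𝔤(g) ∩ [𝔤, 𝔤(g)]` this gives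
`z = P z ∈ [𝔤^𝔧, 𝔤(g)]`, and `𝔤(g) ∩ [𝔤^𝔧, 𝔤(g)]` vanishes by stability of `g` on `𝔤^𝔧`.
-/

open Module LinearMap

namespace Paper

variable (K : Type*) [Field K]

section Basic
variable {L : Type*} [LieRing L] [LieAlgebra K L]

/-- The coadjoint stabilizer `𝔤(g) = {X : g⁅X,·⁆ = 0}` of a linear form. -/
def stab (g : Module.Dual K L) : Submodule K L where
  carrier := {X | ∀ Y, g ⁅X, Y⁆ = 0}
  add_mem' := by intro a b ha hb; intro Y; rw [add_lie, map_add, ha Y, hb Y, add_zero]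
  zero_mem' := by intro Y; rw [zero_lie, map_zero]
  smul_mem' := by intro c a ha; intro Y; rw [smul_lie, map_smul, ha Y, smul_zero]

lemma mem_stab {g : Module.Dual K L} {X : L} : X ∈ stab K g ↔ ∀ Y, g ⁅X, Y⁆ = 0 := Iff.rfl

/-- The coadjoint stabilizer as a Lie subalgebra. -/
def stabLie (g : Module.Dual K L) : LieSubalgebra K L :=
  { stab K g with
    lie_mem' := fun {x y} hx hy => by
      intro Z
      have hx' : ∀ Y, g ⁅x, Y⁆ = 0 := hx
      have hy' : ∀ Y, g ⁅y, Y⁆ = 0 := hy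
      rw [lie_lie, map_sub, hx' ⁅y, Z⁆, hy' ⁅x, Z⁆, sub_zero] }

variable (L) in
/-- The index of a Lie algebra: minimal dimension of a coadjoint stabilizer. -/
noncomputable def lieIndex : ℕ :=
  sInf (Set.range fun g : Module.Dual K L => finrank K (stab K g))

/-- A linear form is regular if its stabilizer has minimal dimension. -/
def IsRegular (g : Module.Dual K L) : Prop := finrank K (stab K g) = lieIndex K L

/-- `[A, 𝔤(g)]` : span of brackets of elements of `A` with elements of the stabilizer. -/
def brSpanFrom (A : Set L) (g : Module.Dual K L) : Submodule K L :=
  Submodule.span K {z | ∃ x ∈ A, ∃ y ∈ stab K g, z = ⁅x, y⁆}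

/-- `[𝔤, 𝔤(g)]`. -/
def brSpan (g : Module.Dual K L) : Submodule K L := brSpanFrom K Set.univ g

/-- Stability of a linear form, via the Tauvel–Yu criterion
`[𝔤,𝔤(f)] ∩ 𝔤(f) = 0` (valid for algebraic Lie algebras). -/
def IsStableForm (g : Module.Dual K L) : Prop := brSpan K g ⊓ stab K g = ⊥

variable (L) in
/-- A Lie algebra is stable if it admits a stable linear form. -/
def IsStableAlg : Prop := ∃ g : Module.Dual K L, IsStableForm K g

end Basic

section Zariski
variable {M : Type*} [AddCommGroup M] [Module K M]

variable (M) in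
/-- Polynomial functions on a (finite-dimensional) vector space: the subalgebra of
functions generated by the linear functionals. -/
def polyAlg : Subalgebra K (M → K) :=
  Algebra.adjoin K (Set.range fun φ : Module.Dual K M => (φ : M → K))

/-- Zariski-open subsets of a vector space: unions of non-vanishing loci of
polynomial functions. -/
def IsZariskiOpen (U : Set M) : Prop :=
  ∃ S : Set (M → K), (∀ p ∈ S, p ∈ polyAlg K M) ∧ U = ⋃ p ∈ S, {x | p x ≠ 0}

end Zariski

section QuasiRed
variable (L : Type*) [LieRing L] [LieAlgebra K L]

/-- A Lie algebra is reductive if its solvable radical coincides with its centre. -/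
def IsReductiveAlg : Prop := LieAlgebra.radical K L = LieAlgebra.center K L

/-- The quotient map `𝔤 → 𝔤/𝔷(𝔤)` as a morphism of Lie algebras. -/
def centerQuotMk : L →ₗ⁅K⁆ L ⧸ (LieAlgebra.center K L) :=
  { ((LieAlgebra.center K L : LieSubmodule K L L) : Submodule K L).mkQ with
    map_lie' := rfl }

variable {L}

/-- A linear form is of reductive type if `𝔤(g)/𝔷`, viewed in `𝔤/𝔷`, is a reductive
Lie algebra whose centre consists of elements acting semisimply on `𝔤`. -/
def IsReductiveTypeForm (g : Module.Dual K L) : Prop :=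
  IsReductiveAlg K ↥((stabLie K g).map (centerQuotMk K L)) ∧
    ∀ X ∈ stabLie K g, (∀ Y ∈ stabLie K g, ⁅X, Y⁆ ∈ LieAlgebra.center K L) →
      (LieAlgebra.ad K L X).IsSemisimple

variable (L) in
/-- A Lie algebra is quasi-reductive if it admits a linear form of reductive type. -/
def QuasiReductive : Prop := ∃ g : Module.Dual K L, IsReductiveTypeForm K g

end QuasiRed

section Rank
variable {L : Type*} [LieRing L] [LieAlgebra K L]

/-- The torus (reductive factor) of the stabilizer of a regular form: the span of
its elements which act semisimply on `𝔤`. -/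
def jTorus (g : Module.Dual K L) : Submodule K L :=
  Submodule.span K {X | X ∈ stab K g ∧ (LieAlgebra.ad K L X).IsSemisimple}

/-- A regular form is strongly regular when the torus of its stabilizer has maximal
dimension among regular forms. -/
def IsStronglyRegular (g : Module.Dual K L) : Prop :=
  IsRegular K g ∧ ∀ g' : Module.Dual K L, IsRegular K g' →
    finrank K (jTorus K g') ≤ finrank K (jTorus K g)

/-- Cartan–Duflo subalgebras: the tori of stabilizers of strongly regular forms. -/
def IsCartanDuflo (j : Submodule K L) : Prop :=
  ∃ g : Module.Dual K L, IsStronglyRegular K g ∧ j = jTorus K g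

variable (L) in
/-- The rank of an algebraic Lie algebra: the common dimension of its Cartan–Duflo
subalgebras. -/
noncomputable def lieRank : ℕ :=
  sSup {n | ∃ g : Module.Dual K L, IsStronglyRegular K g ∧ finrank K (jTorus K g) = n}

/-- The centralizer of a submodule, as a Lie subalgebra. -/
def centralizerSub (j : Submodule K L) : LieSubalgebra K L where
  carrier := {X | ∀ Y ∈ j, ⁅Y, X⁆ = 0}
  add_mem' := by intro a b ha hb Y hY; rw [lie_add, ha Y hY, hb Y hY, add_zero]
  zero_mem' := by intro Y hY; rw [lie_zero]
  smul_mem' := by intro c a ha Y hY; rw [lie_smul, ha Y hY, smul_zero]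
  lie_mem' := by
    intro x y hx hy Y hY
    rw [leibniz_lie, hx Y hY, hy Y hY, zero_lie, lie_zero, add_zero]

end Rank

section LinearAlgebra
variable {K} {V W : Type*} [AddCommGroup V] [Module K V] [AddCommGroup W] [Module K W]

theorem _root_.LinearMap.finite_setOf_not_injective_add_smul [FiniteDimensional K V]
    {A : V →ₗ[K] W} (B : V →ₗ[K] W) (hA : Function.Injective A) :
    {t : K | ¬ Function.Injective (A + t • B)}.Finite := by
  obtain ⟨π, hπ⟩ := A.exists_leftInverse_of_injective (ker_eq_bot.mpr hA)
  -- With `π ∘ A = id`, a kernel vector of `A + t • B` is an eigenvector of `π ∘ B` for `-t⁻¹`.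
  refine ((End.finite_hasEigenvalue (π ∘ₗ B)).image fun μ => -μ⁻¹).subset ?_
  intro t ht
  obtain ⟨v, hv, hv0⟩ : ∃ v, (A + t • B) v = 0 ∧ v ≠ 0 := by
    simpa [injective_iff_map_eq_zero, not_forall, and_comm] using ht
  have hπv : v + t • (π ∘ₗ B) v = 0 := by
    simpa [← LinearMap.comp_apply π A, hπ] using congrArg π hv
  have ht0 : t ≠ 0 := by
    rintro rfl
    exact hv0 (by simpa using hπv)
  refine ⟨-t⁻¹, End.hasEigenvalue_of_hasEigenvector ⟨?_, hv0⟩, by simp⟩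
  rw [End.mem_eigenspace_iff]
  have := congrArg (t⁻¹ • ·) hπv
  simp only [smul_add, smul_smul, inv_mul_cancel₀ ht0, one_smul, smul_zero] at this
  rw [neg_smul, eq_neg_of_add_eq_zero_right this]

theorem _root_.LinearIndependent.finite_setOf_not_linearIndependent_add_smul {ι : Type*} [Finite ι]
    {a : ι → W} (b : ι → W) (ha : LinearIndependent K a) :
    {t : K | ¬ LinearIndependent K (a + t • b)}.Finite := by
  have := Fintype.ofFinite ι
  have hlc : ∀ t : K, Fintype.linearCombination K (a + t • b)
      = Fintype.linearCombination K a + t • Fintype.linearCombination K b := by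
    intro t
    ext c
    simp [Fintype.linearCombination_apply, Finset.sum_add_distrib, Finset.smul_sum, smul_comm t]
  simp_rw [linearIndependent_iff_injective_fintypeLinearCombination, hlc] at ha ⊢
  exact LinearMap.finite_setOf_not_injective_add_smul _ ha

theorem _root_.LinearMap.map_ker_le_range_of_finrank_range_add_smul_le [Infinite K]
    [FiniteDimensional K V] (f φ : V →ₗ[K] W)
    (h : ∀ t : K, finrank K (range (f + t • φ)) ≤ finrank K (range f)) :
    (ker f).map φ ≤ range f := by
  rintro _ ⟨x, hx, rfl⟩
  by_contra hφx
  -- Lifts of a basis of `range f`, together with `φ x`, give `rank f + 1` independent vectors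
  -- lying in `range (f + t • φ)` for generic `t`, since `(f + t • φ) (t⁻¹ • x) = φ x`.
  let e := Module.finBasis K (range f)
  choose v hv using fun i => (e i).2
  have hfv : (fun i => f (v i)) = (range f).subtype ∘ e := funext hv
  have hspan : Submodule.span K (Set.range fun i => f (v i)) = range f := by
    rw [hfv, Set.range_comp, Submodule.span_image, e.span_eq, Submodule.map_subtype_top]
  have hindep : LinearIndependent K (fun o => Option.casesOn' o (φ x) fun i => f (v i)) := by
    refine LinearIndependent.option ?_ (by rwa [hspan])
    rw [hfv]
    exact e.linearIndependent.map' _ (Submodule.ker_subtype _)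
  obtain ⟨t, ht⟩ := ((hindep.finite_setOf_not_linearIndependent_add_smul
    (fun o => Option.casesOn' o 0 fun i => φ (v i))).insert 0).exists_notMem
  rw [Set.mem_insert_iff, not_or, Set.mem_ofPred_eq, not_not] at ht
  have hmem : ∀ o, ((fun o => Option.casesOn' o (φ x) fun i => f (v i)) +
      t • fun o => Option.casesOn' o 0 fun i => φ (v i)) o ∈ range (f + t • φ) := by
    rintro (_ | i)
    · exact ⟨t⁻¹ • x, by simp [mem_ker.mp hx, smul_smul, inv_mul_cancel₀ ht.1]⟩
    · exact ⟨v i, by simp⟩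
  have hcard := Submodule.finrank_mono (Submodule.span_le.mpr (Set.range_subset_iff.mpr hmem))
  rw [finrank_span_eq_card ht.2, Fintype.card_option, Fintype.card_fin] at hcard
  exact absurd (hcard.trans (h t)) (by omega)

theorem _root_.Commute.ker_mem_invtSubmodule {f ψ : End K V} (h : Commute f ψ) :
    ker f ∈ ψ.invtSubmodule := by
  intro v hv
  simp only [Submodule.mem_comap, mem_ker] at hv ⊢
  rw [← End.mul_apply, h.eq, End.mul_apply, hv, map_zero]

theorem _root_.Commute.range_mem_invtSubmodule {f ψ : End K V} (h : Commute f ψ) :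
    range f ∈ ψ.invtSubmodule := by
  rintro _ ⟨v, rfl⟩
  exact ⟨ψ v, by rw [← End.mul_apply, h.eq, End.mul_apply]⟩

variable [FiniteDimensional K V]

theorem _root_.Module.End.IsSemisimple.isCompl_ker_range {f : End K V} (hf : f.IsSemisimple) :
    IsCompl (ker f) (range f) := by
  obtain ⟨q, hq, hkq⟩ := End.isSemisimple_iff.mp hf (ker f) (Commute.refl f).ker_mem_invtSubmodule
  have hrange : range f ≤ q := by
    rintro _ ⟨y, rfl⟩
    obtain ⟨a, ha, b, hb, rfl⟩ :=
      Submodule.mem_sup.mp (hkq.sup_eq_top ▸ Submodule.mem_top (x := y))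
    rw [map_add, mem_ker.mp ha, zero_add]
    exact hq hb
  refine (Submodule.isCompl_iff_disjoint _ _ ?_).mpr (hkq.disjoint.mono_right hrange)
  rw [add_comm, finrank_range_add_finrank_ker]

theorem _root_.Module.End.exists_projection_onto_common_ker {ι : Type*} (s : Finset ι)
    (f : ι → End K V)
    (hss : ∀ i ∈ s, (f i).IsSemisimple) (hcomm : ∀ i ∈ s, ∀ j ∈ s, Commute (f i) (f j)) :
    ∃ P : End K V, (∀ v, ∀ i ∈ s, f i (P v) = 0) ∧ (∀ v, (∀ i ∈ s, f i v = 0) → P v = v) ∧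
      ∀ ψ : End K V, (∀ i ∈ s, Commute (f i) ψ) → Commute P ψ := by
  classical
  induction s using Finset.induction_on with
  | empty => exact ⟨1, by simp, by simp, fun ψ _ => Commute.one_left ψ⟩
  | @insert i s _ ih =>
    obtain ⟨P, hPker, hPfix, hPcomm⟩ := ih (fun j hj => hss j (by simp [hj]))
      (fun j hj k hk => hcomm j (by simp [hj]) k (by simp [hk]))
    have hc := (hss i (by simp)).isCompl_ker_range
    set Q := (ker (f i)).projection (range (f i)) hc
    have hQcomm : ∀ ψ, Commute (f i) ψ → Commute Q ψ := fun ψ hψ =>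
      (Submodule.isIdempotentElem_projection hc).commute_iff.mpr <| by
        rw [Submodule.range_projection, Submodule.ker_projection]
        exact ⟨hψ.ker_mem_invtSubmodule, hψ.range_mem_invtSubmodule⟩
    refine ⟨Q * P, fun v j hj => ?_, fun v hv => ?_, fun ψ hψ => ?_⟩
    · rcases Finset.mem_insert.mp hj with rfl | hj
      · exact mem_ker.mp (Submodule.projection_apply_mem hc _)
      · rw [End.mul_apply, ← End.mul_apply, ← (hQcomm _ (hcomm i (by simp) j (by simp [hj]))).eq,
          End.mul_apply, hPker v j hj, map_zero]
    · rw [End.mul_apply, hPfix v fun j hj => hv j (by simp [hj])]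
      exact Submodule.projection_apply_of_mem_left hc (hv i (by simp))
    · exact (hQcomm ψ (hψ i (by simp))).mul_left (hPcomm ψ fun j hj => hψ j (by simp [hj]))

end LinearAlgebra

section Lie
variable {K} {L : Type*} [LieRing L] [LieAlgebra K L]

def kirillovForm (g : Module.Dual K L) : LinearMap.BilinForm K L :=
  (LieAlgebra.ad K L : L →ₗ[K] Module.End K L).compr₂ g

@[simp]
lemma kirillovForm_apply (g : Module.Dual K L) (X Y : L) : kirillovForm g X Y = g ⁅X, Y⁆ := rfl

lemma ker_kirillovForm (g : Module.Dual K L) : ker (kirillovForm g) = stab K g := by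
  ext X
  simp [LinearMap.ext_iff, mem_stab]

lemma kirillovForm_add_smul (g h : Module.Dual K L) (t : K) :
    kirillovForm (g + t • h) = kirillovForm g + t • kirillovForm h := by
  ext
  simp

lemma IsRegular.finrank_stab_le {g : Module.Dual K L} (hg : IsRegular K g)
    (g' : Module.Dual K L) : finrank K (stab K g) ≤ finrank K (stab K g') :=
  hg ▸ Nat.sInf_le ⟨g', rfl⟩

theorem IsRegular.lie_eq_zero [Infinite K] [FiniteDimensional K L] {g : Module.Dual K L}
    (hg : IsRegular K g) {x y : L} (hx : x ∈ stab K g) (hy : y ∈ stab K g) : ⁅x, y⁆ = 0 := by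
  refine (Module.forall_dual_apply_eq_zero_iff K _).mp fun h => ?_
  have hrank : ∀ t : K, finrank K (range (kirillovForm g + t • kirillovForm h))
      ≤ finrank K (range (kirillovForm g)) := by
    intro t
    have h₁ := finrank_range_add_finrank_ker (kirillovForm (g + t • h))
    have h₂ := finrank_range_add_finrank_ker (kirillovForm g)
    rw [ker_kirillovForm] at h₁ h₂
    rw [← kirillovForm_add_smul]
    have := hg.finrank_stab_le (g + t • h)
    omega
  obtain ⟨x', hx'⟩ := map_ker_le_range_of_finrank_range_add_smul_le _ _ hrank
    ⟨x, (ker_kirillovForm g).symm ▸ hx, rfl⟩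
  have hxy : g ⁅x', y⁆ = h ⁅x, y⁆ := by simpa using congrArg (· y) hx'
  rw [← hxy, ← lie_skew, map_neg, hy x', neg_zero]

lemma mem_centralizerSub_span_iff {T : Set L} {X : L} :
    X ∈ centralizerSub K (Submodule.span K T) ↔ ∀ s ∈ T, ⁅s, X⁆ = 0 := by
  refine ⟨fun h s hs => h s (Submodule.subset_span hs), fun h Y hY => ?_⟩
  induction hY using Submodule.span_induction with
  | mem s hs => exact h s hs
  | zero => exact zero_lie X
  | add a b _ _ ha hb => rw [add_lie, ha, hb, add_zero]
  | smul c a _ ha => rw [smul_lie, ha, smul_zero]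

lemma commute_ad_of_lie_eq_zero {s y : L} (h : ⁅s, y⁆ = 0) :
    Commute (LieAlgebra.ad K L s) (LieAlgebra.ad K L y) := by
  ext z
  simp only [Module.End.mul_apply, LieAlgebra.ad_apply]
  rw [leibniz_lie, h, zero_lie, zero_add]

lemma exists_projection_onto_centralizerSub [FiniteDimensional K L] (T : Finset L)
    (hss : ∀ s ∈ T, (LieAlgebra.ad K L s).IsSemisimple) (hcomm : ∀ s ∈ T, ∀ s' ∈ T, ⁅s, s'⁆ = 0) :
    ∃ P : Module.End K L, (∀ X, P X ∈ centralizerSub K (Submodule.span K T)) ∧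
      (∀ X ∈ centralizerSub K (Submodule.span K T), P X = X) ∧
      ∀ y, (∀ s ∈ T, ⁅s, y⁆ = 0) → Commute P (LieAlgebra.ad K L y) := by
  obtain ⟨P, hPker, hPfix, hPcomm⟩ :=
    Module.End.exists_projection_onto_common_ker T (LieAlgebra.ad K L) hss
      fun s hs s' hs' => commute_ad_of_lie_eq_zero (hcomm s hs s' hs')
  exact ⟨P, fun X => mem_centralizerSub_span_iff.mpr fun s hs => hPker X s hs,
    fun X hX => hPfix X fun s hs => mem_centralizerSub_span_iff.mp hX s hs,
    fun y hy => hPcomm _ fun s hs => commute_ad_of_lie_eq_zero (hy s hs)⟩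

lemma inf_brSpan_le_brSpanFrom_of_commute {g : Module.Dual K L} {A : Set L}
    (P : Module.End K L) (hPA : ∀ X, P X ∈ A) (hPfix : ∀ z ∈ stab K g, P z = z)
    (hPcomm : ∀ y ∈ stab K g, Commute P (LieAlgebra.ad K L y)) :
    stab K g ⊓ brSpan K g ≤ brSpanFrom K A g := by
  rintro z ⟨hzs, hzb⟩
  have hmap : brSpan K g ≤ (brSpanFrom K A g).comap P := by
    refine Submodule.span_le.mpr ?_
    rintro _ ⟨x, -, y, hy, rfl⟩
    have hPxy : P ⁅x, y⁆ = ⁅P x, y⁆ := by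
      have := congrArg (· x) (hPcomm y hy).eq
      simp only [Module.End.mul_apply, LieAlgebra.ad_apply] at this
      rw [← lie_skew, map_neg, this, lie_skew]
    exact Submodule.subset_span ⟨P x, hPA x, y, hy, hPxy⟩
  simpa [hPfix z hzs] using hmap hzb

lemma inf_brSpanFrom_eq_bot_of_isStableForm {H : LieSubalgebra K L} {g : Module.Dual K L}
    (hH : stab K g ≤ H.toSubmodule)
    (hg : IsStableForm K (g ∘ₗ H.toSubmodule.subtype : Module.Dual K H)) :
    stab K g ⊓ brSpanFrom K (H : Set L) g = ⊥ := by
  set gH : Module.Dual K H := g ∘ₗ H.toSubmodule.subtype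
  have hsub : ∀ {x : H}, (x : L) ∈ stab K g → x ∈ stab K gH := fun hx Y => hx Y
  have hmap : brSpanFrom K H g ≤ (brSpan K gH).map H.toSubmodule.subtype := by
    refine Submodule.span_le.mpr ?_
    rintro _ ⟨a, ha, s, hs, rfl⟩
    exact ⟨⁅⟨a, ha⟩, ⟨s, hH hs⟩⁆, Submodule.subset_span ⟨_, trivial, _, hsub hs, rfl⟩, rfl⟩
  rw [eq_bot_iff]
  rintro _ ⟨hzs, hzb⟩
  obtain ⟨z, hz, rfl⟩ := hmap hzb
  have : z ∈ brSpan K gH ⊓ stab K gH := ⟨hz, hsub hzs⟩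
  rw [hg, Submodule.mem_bot] at this
  simp [this]

end Lie

section Stmt5
variable (K : Type*) [Field K] [IsAlgClosed K] [CharZero K]
variable {L : Type*} [LieRing L] [LieAlgebra K L] [FiniteDimensional K L]

/-- if `g` is a strongly regular, `𝔧`-fixed form whose restriction to the
centralizer `𝔤^𝔧` is stable, then
`𝔤(g) ∩ [𝔤,𝔤(g)] = 𝔤(g) ∩ [𝔤^𝔧,𝔤(g)]`, and hence `g` is stable as a form on `𝔤`. -/
theorem stable_of_centralizer_stable (j : Submodule K L) (hj : IsCartanDuflo K j)
    (g : Module.Dual K L) (hsr : IsStronglyRegular K g)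
    (hfix : ∀ Y ∈ j, ∀ X : L, g ⁅Y, X⁆ = 0)
    (hstab : IsStableForm K ((g ∘ₗ (centralizerSub K j).toSubmodule.subtype : Module.Dual K ↥(centralizerSub K j)))) :
    stab K g ⊓ brSpan K g
        = stab K g ⊓ brSpanFrom K ((centralizerSub K j : Set L)) g ∧
      IsStableForm K g := by
  obtain ⟨g₀, -, rfl⟩ := hj
  have habel : ∀ x ∈ stab K g, ∀ y ∈ stab K g, ⁅x, y⁆ = 0 := fun x hx y hy =>
    hsr.1.lie_eq_zero hx hy
  obtain ⟨B, hBS, hBspan, hBli⟩ :=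
    exists_linearIndependent K {X | X ∈ stab K g₀ ∧ (LieAlgebra.ad K L X).IsSemisimple}
  set T := hBli.setFinite.toFinset
  have hTspan : Submodule.span K T = jTorus K g₀ := by rw [Set.Finite.coe_toFinset, hBspan]; rfl
  have hTstab : ∀ s ∈ T, s ∈ stab K g := fun s hs X =>
    hfix s (hTspan ▸ Submodule.subset_span hs) X
  rw [← hTspan] at hstab ⊢
  obtain ⟨P, hPC, hPfix, hPcomm⟩ := exists_projection_onto_centralizerSub T
    (fun s hs => (hBS (hBli.setFinite.mem_toFinset.mp hs)).2)
    (fun s hs s' hs' => habel s (hTstab s hs) s' (hTstab s' hs'))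
  have hstabC : stab K g ≤ (centralizerSub K (Submodule.span K T)).toSubmodule := fun z hz =>
    mem_centralizerSub_span_iff.mpr fun s hs => habel s (hTstab s hs) z hz
  have hle := inf_brSpan_le_brSpanFrom_of_commute P hPC (fun z hz => hPfix z (hstabC hz))
    (fun y hy => hPcomm y fun s hs => habel s (hTstab s hs) y hy)
  have hbot := inf_brSpanFrom_eq_bot_of_isStableForm hstabC hstab
  have hbot' : stab K g ⊓ brSpan K g = ⊥ := eq_bot_iff.mpr fun z hz => hbot ▸ ⟨hz.1, hle hz⟩
  exact ⟨hbot'.trans hbot.symm, by rw [IsStableForm, inf_comm, hbot']⟩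

end Stmt5
end Paper
end

section
/- Let V be a vector space of even dimension 2p (p ≥ 2) over K with symplectic form ξ = Σ_{j=1}^{p} e*_{2j-1} ∧ e*_{2j}, and let 𝒱 be the flag with V_j = span(e₁,...,e_{2j-1}) for 1 ≤ j ≤ p and V_{p+1} = V. Let 𝔤 = 𝔯_𝒱 = 𝔩 ⊕ 𝔫, where 𝔩 = ⊕_{j=1}^{p} K·H_j with H_j = E_{2j-1,2j-1} − E_{2j,2j}, and 𝔫 = ⊕_{j=1}^{p} K·Z_j ⊕ ⊕_{j=1}^{p-1} K·T_j with Z_j = 2E_{2j-1,2j}, T_j = E_{2j-1,2j+2} + E_{2j+1,2j}. Let g ∈ 𝔤* vanish on 𝔩 with ζ_j = g(Z_j), τ_j = g(T_j) and Π_j ζ_j ≠ 0. Then the coadjoint stabilizer is 𝔤(g) = ⊕_{i=1}^{p-1} K·W_i where W_i = T_i − (τ_i/2)(Z_i/ζ_i + Z_{i+1}/ζ_{i+1}). -/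
/-!
Write `X ∈ 𝔤` as `A + B + C` with `A ∈ 𝔩`, `B` in the span of the `Z_j` and `C = ∑ cᵢ Tᵢ`.
Since every `ζ_l ≠ 0`, the pairing `(H_j, Z_l) ↦ g ⁅H_j, Z_l⁆ = 2 δ_{jl} ζ_l` is nondegenerate.
Pairing `X` against the `Z_l`, which commute with `𝔫`, gives `A = 0`. Each `Wᵢ` lies in `𝔤(g)`, so
`X - ∑ cᵢ Wᵢ` does too; it lies in the span of the `Z_j`, and pairing it against the `H_l` shows
that it vanishes. Only the bracket relations are used, so the argument applies to any elements of a
Lie algebra satisfying them.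
-/

open Module LinearMap

namespace Paper

variable (K : Type*) [Field K] [IsAlgClosed K] [CharZero K]

/-- Elementary matrix `E_{a,b}` (with `ℕ` indices; zero if out of range). -/
def Eij (N a b : ℕ) : Matrix (Fin N) (Fin N) K :=
  Matrix.of fun i k => if (i : ℕ) = a ∧ (k : ℕ) = b then 1 else 0

variable (p : ℕ)

/-- `H_j = E_{2j-1,2j-1} − E_{2j,2j}` (0-indexed). -/
def Hgen (N j : ℕ) : Matrix (Fin N) (Fin N) K :=
  Eij K N (2 * j) (2 * j) - Eij K N (2 * j + 1) (2 * j + 1)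

/-- `Z_j = 2E_{2j-1,2j}` (0-indexed). -/
def Zgen (N j : ℕ) : Matrix (Fin N) (Fin N) K :=
  (2 : K) • Eij K N (2 * j) (2 * j + 1)

/-- `T_j = E_{2j-1,2j+2} + E_{2j+1,2j}` (0-indexed). -/
def Tgen (N j : ℕ) : Matrix (Fin N) (Fin N) K :=
  Eij K N (2 * j) (2 * j + 3) + Eij K N (2 * j + 2) (2 * j + 1)

/-- The Lie algebra `𝔤 = 𝔯_𝒱 = 𝔩 ⊕ 𝔫`, spanned by the `H_j, Z_j (j < p)` and the
`T_j (j < p−1)`, inside `𝔤𝔩(2p, K)`. -/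
def rEven : Submodule K (Matrix (Fin (2 * p)) (Fin (2 * p)) K) :=
  Submodule.span K
    ({M | ∃ j < p, M = Hgen K (2 * p) j} ∪ {M | ∃ j < p, M = Zgen K (2 * p) j} ∪
      {M | ∃ j < p - 1, M = Tgen K (2 * p) j})

/-- `W_i = T_i − (τ_i/2)(Z_i/ζ_i + Z_{i+1}/ζ_{i+1})`. -/
def Wgen (N : ℕ) (ζ τ : ℕ → K) (i : ℕ) : Matrix (Fin N) (Fin N) K :=
  Tgen K N i - (τ i / (2 * ζ i)) • Zgen K N i - (τ i / (2 * ζ (i + 1))) • Zgen K N (i + 1)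

section Matrix

variable {F : Type*} [Field F] (N : ℕ)

lemma Eij_mul (a b c d : ℕ) :
    Eij F N a b * Eij F N c d = if b = c ∧ b < N then Eij F N a d else 0 := by
  ext i k
  simp only [Matrix.mul_apply, Eij, Matrix.of_apply]
  split_ifs with h
  · rw [Finset.sum_eq_single ⟨b, h.2⟩] <;> aesop
  · rw [Matrix.zero_apply]
    refine Finset.sum_eq_zero fun m _ => ?_
    have := m.isLt
    split_ifs <;> first | omega | simp

lemma lie_Hgen_Zgen (j : ℕ) {l : ℕ} (hl : 2 * l + 1 < N) :
    ⁅Hgen F N j, Zgen F N l⁆ = if j = l then (2 : F) • Zgen F N l else 0 := by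
  obtain rfl | hjl := eq_or_ne j l
  all_goals
    simp only [Ring.lie_def, Hgen, Zgen, Matrix.sub_mul, Matrix.mul_sub, smul_mul_assoc,
      mul_smul_comm, Eij_mul]
    simp (disch := omega) only [if_neg, if_pos, if_true, true_and]
    module

lemma lie_Hgen_Tgen (j : ℕ) {l : ℕ} (hl : 2 * l + 3 < N) :
    ⁅Hgen F N j, Tgen F N l⁆ = if j = l ∨ j = l + 1 then Tgen F N l else 0 := by
  obtain rfl | rfl | hjl : j = l ∨ j = l + 1 ∨ (j ≠ l ∧ j ≠ l + 1) := by omega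
  all_goals
    simp only [Ring.lie_def, Hgen, Tgen, Matrix.sub_mul, Matrix.mul_sub, Matrix.add_mul,
      Matrix.mul_add, Eij_mul, Nat.mul_add_one, Nat.add_assoc]
    simp (disch := omega) only [if_neg, if_pos, if_true, true_and, true_or, or_true]
    module

lemma lie_Zgen_Zgen (j l : ℕ) : ⁅Zgen F N j, Zgen F N l⁆ = 0 := by
  simp only [Ring.lie_def, Zgen, smul_mul_assoc, mul_smul_comm, Eij_mul]
  simp (disch := omega) only [if_neg]
  module

lemma lie_Zgen_Tgen (j l : ℕ) : ⁅Zgen F N j, Tgen F N l⁆ = 0 := by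
  simp only [Ring.lie_def, Zgen, Tgen, smul_mul_assoc, mul_smul_comm, Matrix.add_mul,
    Matrix.mul_add, Eij_mul]
  simp (disch := omega) only [if_neg]
  module

lemma lie_Tgen_Tgen (j l : ℕ) : ⁅Tgen F N j, Tgen F N l⁆ = 0 := by
  simp only [Ring.lie_def, Tgen, Matrix.add_mul, Matrix.mul_add, Eij_mul]
  simp (disch := omega) only [if_neg]
  module

end Matrix

section CoadjointStabilizer

variable {F L : Type*} [Field F] [LieRing L] [LieAlgebra F L]

open Submodule

def coadjointStabilizer (𝔤 : Submodule F L) (g : Module.Dual F L) : Submodule F L where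
  carrier := {X | X ∈ 𝔤 ∧ ∀ Y ∈ 𝔤, g ⁅X, Y⁆ = 0}
  add_mem' := fun ⟨hX, hXg⟩ ⟨hX', hXg'⟩ =>
    ⟨add_mem hX hX', fun Y hY => by rw [add_lie, map_add, hXg Y hY, hXg' Y hY, add_zero]⟩
  zero_mem' := ⟨zero_mem _, fun Y _ => by rw [zero_lie, map_zero]⟩
  smul_mem' := fun a _ ⟨hX, hXg⟩ =>
    ⟨smul_mem _ a hX, fun Y hY => by rw [smul_lie, map_smul, hXg Y hY, smul_zero]⟩

lemma mem_coadjointStabilizer_span_iff {s : Set L} {g : Module.Dual F L} {X : L} :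
    X ∈ coadjointStabilizer (span F s) g ↔ X ∈ span F s ∧ ∀ Y ∈ s, g ⁅X, Y⁆ = 0 := by
  refine and_congr_right fun _ => ⟨fun h Y hY => h Y (subset_span hY), fun h Y hY => ?_⟩
  induction hY using span_induction with
  | mem Y hY => exact h Y hY
  | zero => rw [lie_zero, map_zero]
  | add Y Y' _ _ hY hY' => rw [lie_add, map_add, hY, hY', add_zero]
  | smul a Y _ hY => rw [lie_smul, map_smul, hY, smul_zero]

lemma lie_eq_zero_of_mem_span {s : Set L} {v X : L} (hs : ∀ Y ∈ s, ⁅Y, v⁆ = 0)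
    (hX : X ∈ span F s) : ⁅X, v⁆ = 0 := by
  induction hX using span_induction with
  | mem Y hY => exact hs Y hY
  | zero => rw [zero_lie]
  | add Y Y' _ _ hY hY' => rw [add_lie, hY, hY', add_zero]
  | smul a Y _ hY => rw [smul_lie, hY, smul_zero]

lemma exists_sum_eq_of_mem_span_setOf_lt {M : Type*} [AddCommGroup M] [Module F M]
    {f : ℕ → M} {n : ℕ} {x : M} (hx : x ∈ span F {y | ∃ j < n, y = f j}) :
    ∃ c : ℕ → F, ∑ j ∈ Finset.range n, c j • f j = x := by
  induction hx using span_induction with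
  | mem y hy =>
    obtain ⟨j, hj, rfl⟩ := hy
    exact ⟨fun i => if i = j then 1 else 0, by simp [hj]⟩
  | zero => exact ⟨0, by simp⟩
  | add y y' _ _ hy hy' =>
    obtain ⟨c, rfl⟩ := hy
    obtain ⟨c', rfl⟩ := hy'
    exact ⟨c + c', by simp only [Pi.add_apply, add_smul, Finset.sum_add_distrib]⟩
  | smul a y _ hy =>
    obtain ⟨c, rfl⟩ := hy
    exact ⟨a • c, by simp only [Pi.smul_apply, smul_eq_mul, mul_smul, Finset.smul_sum]⟩

lemma eq_zero_of_dual_lie_eq_zero {g : Module.Dual F L} {u v : ℕ → L} {d : ℕ → F} {n : ℕ}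
    (huv : ∀ j < n, ∀ l < n, g ⁅u j, v l⁆ = if j = l then d l else 0)
    (hd : ∀ l < n, d l ≠ 0) {X : L} (hX : X ∈ span F {y | ∃ j < n, y = u j})
    (hXv : ∀ l < n, g ⁅X, v l⁆ = 0) : X = 0 := by
  obtain ⟨c, rfl⟩ := exists_sum_eq_of_mem_span_setOf_lt hX
  have hc : ∀ l < n, c l * d l = 0 := fun l hl => by
    have := hXv l hl
    rwa [sum_lie, map_sum, Finset.sum_eq_single_of_mem l (Finset.mem_range.mpr hl), smul_lie,
      map_smul, huv l hl l hl, if_pos rfl, smul_eq_mul] at this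
    intro j hj hjl
    rw [smul_lie, map_smul, huv j (Finset.mem_range.mp hj) l hl, if_neg hjl, smul_zero]
  refine Finset.sum_eq_zero fun l hl => ?_
  have hl := Finset.mem_range.mp hl
  rw [(mul_eq_zero.mp (hc l hl)).resolve_right (hd l hl), zero_smul]

structure EvenBracketRelations (F : Type*) {L : Type*} [Field F] [LieRing L] [LieAlgebra F L]
    (p : ℕ) (H Z T : ℕ → L) : Prop where
  lie_H_Z : ∀ j < p, ∀ l < p, ⁅H j, Z l⁆ = if j = l then (2 : F) • Z l else 0
  lie_H_T : ∀ j < p, ∀ l < p - 1, ⁅H j, T l⁆ = if j = l ∨ j = l + 1 then T l else 0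
  lie_Z_Z : ∀ j < p, ∀ l < p, ⁅Z j, Z l⁆ = 0
  lie_Z_T : ∀ j < p, ∀ l < p - 1, ⁅Z j, T l⁆ = 0
  lie_T_T : ∀ j < p - 1, ∀ l < p - 1, ⁅T j, T l⁆ = 0

def wElement (Z T : ℕ → L) (ζ τ : ℕ → F) (i : ℕ) : L :=
  T i - (τ i / (2 * ζ i)) • Z i - (τ i / (2 * ζ (i + 1))) • Z (i + 1)

section Relations

variable {p : ℕ} {H Z T : ℕ → L} {g : Module.Dual F L} {ζ τ : ℕ → F}

lemma EvenBracketRelations.apply_lie_H_Z (hrel : EvenBracketRelations F p H Z T)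
    (hZ : ∀ j < p, g (Z j) = ζ j) {j l : ℕ} (hj : j < p) (hl : l < p) :
    g ⁅H j, Z l⁆ = if j = l then 2 * ζ l else 0 := by
  rw [hrel.lie_H_Z j hj l hl]
  split_ifs
  · rw [map_smul, hZ l hl, smul_eq_mul]
  · rw [map_zero]

lemma EvenBracketRelations.wElement_mem_coadjointStabilizer [NeZero (2 : F)]
    (hrel : EvenBracketRelations F p H Z T) (hZ : ∀ j < p, g (Z j) = ζ j)
    (hζ : ∀ j < p, ζ j ≠ 0) (hT : ∀ j < p - 1, g (T j) = τ j) {i : ℕ} (hi : i < p - 1) :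
    wElement Z T ζ τ i ∈ coadjointStabilizer
      (span F ({M | ∃ j < p, M = H j} ∪ {M | ∃ j < p, M = Z j} ∪ {M | ∃ j < p - 1, M = T j}))
      g := by
  have hi₀ : i < p := by omega
  have hi₁ : i + 1 < p := by omega
  rw [mem_coadjointStabilizer_span_iff]
  refine ⟨sub_mem (sub_mem ?_ (smul_mem _ _ ?_)) (smul_mem _ _ ?_), ?_⟩
  · exact subset_span (Or.inr ⟨i, hi, rfl⟩)
  · exact subset_span (Or.inl (Or.inr ⟨i, hi₀, rfl⟩))
  · exact subset_span (Or.inl (Or.inr ⟨i + 1, hi₁, rfl⟩))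
  rintro Y ((⟨j, hj, rfl⟩ | ⟨j, hj, rfl⟩) | ⟨j, hj, rfl⟩)
  · rw [← lie_skew, map_neg, neg_eq_zero, wElement, lie_sub, lie_sub, lie_smul, lie_smul,
      map_sub, map_sub, map_smul, map_smul, hrel.lie_H_T j hj i hi, hrel.apply_lie_H_Z hZ hj hi₀,
      hrel.apply_lie_H_Z hZ hj hi₁]
    obtain rfl | rfl | hji : j = i ∨ j = i + 1 ∨ (j ≠ i ∧ j ≠ i + 1) := by omega
    · simp [hT j hi, div_mul_cancel₀ _ (mul_ne_zero two_ne_zero (hζ j hi₀))]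
    · simp [hT i hi, div_mul_cancel₀ _ (mul_ne_zero two_ne_zero (hζ (i + 1) hi₁))]
    · simp [hji]
  · rw [wElement, sub_lie, sub_lie, smul_lie, smul_lie, ← lie_skew, hrel.lie_Z_T j hj i hi,
      hrel.lie_Z_Z i hi₀ j hj, hrel.lie_Z_Z (i + 1) hi₁ j hj]
    simp
  · rw [wElement, sub_lie, sub_lie, smul_lie, smul_lie, hrel.lie_T_T i hi j hj,
      hrel.lie_Z_T i hi₀ j hj, hrel.lie_Z_T (i + 1) hi₁ j hj]
    simp

lemma EvenBracketRelations.mem_span_Z_sup_span_T_of_mem_coadjointStabilizer [NeZero (2 : F)]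
    (hrel : EvenBracketRelations F p H Z T) (hZ : ∀ j < p, g (Z j) = ζ j)
    (hζ : ∀ j < p, ζ j ≠ 0) {X : L} (hX : X ∈ coadjointStabilizer
      (span F ({M | ∃ j < p, M = H j} ∪ {M | ∃ j < p, M = Z j} ∪ {M | ∃ j < p - 1, M = T j}))
      g) :
    X ∈ span F {M | ∃ j < p, M = Z j} ⊔ span F {M | ∃ j < p - 1, M = T j} := by
  obtain ⟨hX, hXg⟩ := hX
  rw [span_union, span_union] at hX
  obtain ⟨_, hAB, C, hC, rfl⟩ := mem_sup.mp hX
  obtain ⟨A, hA, B, hB, rfl⟩ := mem_sup.mp hAB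
  suffices A = 0 by
    rw [this, zero_add]
    exact add_mem_sup hB hC
  refine eq_zero_of_dual_lie_eq_zero (fun j hj l hl => hrel.apply_lie_H_Z hZ hj hl)
    (fun l hl => mul_ne_zero two_ne_zero (hζ l hl)) hA fun l hl => ?_
  have hBZ : ⁅B, Z l⁆ = 0 := lie_eq_zero_of_mem_span
    (by rintro _ ⟨j, hj, rfl⟩; exact hrel.lie_Z_Z j hj l hl) hB
  have hCZ : ⁅C, Z l⁆ = 0 := lie_eq_zero_of_mem_span
    (by rintro _ ⟨j, hj, rfl⟩; rw [← lie_skew, hrel.lie_Z_T l hl j hj, neg_zero]) hC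
  simpa [add_lie, hBZ, hCZ] using hXg (Z l) (subset_span (Or.inl (Or.inr ⟨l, hl, rfl⟩)))

lemma EvenBracketRelations.coadjointStabilizer_le_span_wElement [NeZero (2 : F)]
    (hrel : EvenBracketRelations F p H Z T) (hZ : ∀ j < p, g (Z j) = ζ j)
    (hζ : ∀ j < p, ζ j ≠ 0) (hT : ∀ j < p - 1, g (T j) = τ j) :
    coadjointStabilizer
      (span F ({M | ∃ j < p, M = H j} ∪ {M | ∃ j < p, M = Z j} ∪ {M | ∃ j < p - 1, M = T j})) g
      ≤ span F {M | ∃ i < p - 1, M = wElement Z T ζ τ i} := by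
  intro X hX
  obtain ⟨B, hB, _, hC, rfl⟩ :=
    mem_sup.mp (hrel.mem_span_Z_sup_span_T_of_mem_coadjointStabilizer hZ hζ hX)
  obtain ⟨c, rfl⟩ := exists_sum_eq_of_mem_span_setOf_lt hC
  set W := ∑ i ∈ Finset.range (p - 1), c i • wElement Z T ζ τ i
  have hW : W ∈ span F {M | ∃ i < p - 1, M = wElement Z T ζ τ i} :=
    sum_mem fun i hi => smul_mem _ _ (subset_span ⟨i, Finset.mem_range.mp hi, rfl⟩)
  suffices hR : B + ∑ i ∈ Finset.range (p - 1), c i • T i - W = 0 by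
    rwa [sub_eq_zero.mp hR]
  have hRZ : B + ∑ i ∈ Finset.range (p - 1), c i • T i - W ∈ span F {M | ∃ j < p, M = Z j} := by
    rw [add_sub_assoc, ← Finset.sum_sub_distrib]
    refine add_mem hB (sum_mem fun i hi => ?_)
    have hi := Finset.mem_range.mp hi
    rw [← smul_sub, wElement, sub_sub, sub_sub_cancel]
    exact smul_mem _ _ (add_mem (smul_mem _ _ (subset_span ⟨i, by omega, rfl⟩))
      (smul_mem _ _ (subset_span ⟨i + 1, by omega, rfl⟩)))
  have hRstab := sub_mem hX (sum_mem fun i hi => smul_mem _ (c i)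
      (hrel.wElement_mem_coadjointStabilizer hZ hζ hT (Finset.mem_range.mp hi)))
  refine eq_zero_of_dual_lie_eq_zero (u := Z) (v := H) (d := fun l => -(2 * ζ l)) ?_
    (fun l hl => neg_ne_zero.mpr (mul_ne_zero two_ne_zero (hζ l hl))) hRZ
    fun l hl => hRstab.2 _ (subset_span (Or.inl (Or.inl ⟨l, hl, rfl⟩)))
  intro j hj l hl
  rw [← lie_skew, map_neg, hrel.apply_lie_H_Z hZ hl hj]
  obtain rfl | hjl := eq_or_ne j l
  · simp
  · simp [hjl, hjl.symm]

lemma EvenBracketRelations.coadjointStabilizer_eq_span_wElement [NeZero (2 : F)]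
    (hrel : EvenBracketRelations F p H Z T) (hZ : ∀ j < p, g (Z j) = ζ j)
    (hζ : ∀ j < p, ζ j ≠ 0) (hT : ∀ j < p - 1, g (T j) = τ j) :
    coadjointStabilizer
      (span F ({M | ∃ j < p, M = H j} ∪ {M | ∃ j < p, M = Z j} ∪ {M | ∃ j < p - 1, M = T j})) g
      = span F {M | ∃ i < p - 1, M = wElement Z T ζ τ i} :=
  le_antisymm (hrel.coadjointStabilizer_le_span_wElement hZ hζ hT) <| span_le.mpr <| by
    rintro _ ⟨i, hi, rfl⟩
    exact hrel.wElement_mem_coadjointStabilizer hZ hζ hT hi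

end Relations

end CoadjointStabilizer

section MatrixLie

-- Globally, matrices only carry the commutator `Bracket`, not a `LieRing` structure.
attribute [local instance 100] LieRing.ofAssociativeRing

lemma evenBracketRelations_matrix {F : Type*} [Field F] :
    EvenBracketRelations F p (Hgen F (2 * p)) (Zgen F (2 * p)) (Tgen F (2 * p)) where
  lie_H_Z j _ l hl := lie_Hgen_Zgen _ j (by omega)
  lie_H_T j _ l hl := lie_Hgen_Tgen _ j (by omega)
  lie_Z_Z j _ l _ := lie_Zgen_Zgen _ j l
  lie_Z_T j _ l _ := lie_Zgen_Tgen _ j l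
  lie_T_T j _ l _ := lie_Tgen_Tgen _ j l

end MatrixLie

theorem stab_even_case
    (g : Module.Dual K (Matrix (Fin (2 * p)) (Fin (2 * p)) K)) (ζ τ : ℕ → K)
    (hZ : ∀ j < p, g (Zgen K (2 * p) j) = ζ j) (hζ : ∀ j < p, ζ j ≠ 0)
    (hT : ∀ j < p - 1, g (Tgen K (2 * p) j) = τ j) :
    ∀ X : Matrix (Fin (2 * p)) (Fin (2 * p)) K,
      (X ∈ rEven K p ∧ ∀ Y ∈ rEven K p, g ⁅X, Y⁆ = 0) ↔
        X ∈ Submodule.span K {M | ∃ i < p - 1, M = Wgen K (2 * p) ζ τ i} :=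
  letI : LieRing (Matrix (Fin (2 * p)) (Fin (2 * p)) K) := LieRing.ofAssociativeRing
  SetLike.ext_iff.mp <|
    (evenBracketRelations_matrix p).coadjointStabilizer_eq_span_wElement hZ hζ hT

end Paper
end

section
/- Let V be a K-vector space of odd dimension 2p+1 (p ≥ 2) with alternating form ξ = Σ_{j=1}^{p} e*_{2j-1} ∧ e*_{2j} of maximal rank 2p, and consider the Lie algebra 𝔤 = 𝔯_𝒱 spanned by H₁,...,H_{p+1}, Z₁,...,Z_p, T₁,...,T_p with H_{p+1} = E_{2p+1,2p+1}, T_p = E_{2p+1,2p}, and the other generators as in the even case, with brackets [H_j, Z_l] = 2δ_{jl}Z_l (1 ≤ j,l ≤ p), [H_j, T_l] = (δ_{jl}+δ_{j,l+1})T_l for l ≤ p−1, [H_j, T_p] = δ_{jp}T_p, [H_{p+1}, T_p] = T_p, [H_{p+1}, Z_j] = 0, [H_{p+1}, T_j] = 0 for j ≤ p−1, all other brackets zero. If g ∈ 𝔤* vanishes on the span of the H_i and satisfies τ_p·Π_{j=1}^p ζ_j ≠ 0 (where ζ_j = g(Z_j), τ_j = g(T_j)), then 𝔤(g) = ⊕_{i=1}^{p-1}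 K·W_i with W_i = T_i − (τ_i/2)(Z_i/ζ_i + Z_{i+1}/ζ_{i+1}), and with H = Σ_{i=1}^{p+1} H_i one has [H, W_i] = 2W_i, hence [𝔤,𝔤(g)] ∩ 𝔤(g) ≠ {0} and g is not stable. -/
open Module LinearMap

attribute [local instance 100] LieRing.ofAssociativeRing

namespace Paper

variable (K : Type*) [Field K] [IsAlgClosed K] [CharZero K]

variable (p : ℕ)

section
variable {K : Type*} [Field K] {M : Type*} [LieRing M] [LieAlgebra K M]

/-- The stabilizer, inside a subalgebra `𝔞` (given as a submodule), of the restriction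
of a linear form `g`. -/
def stabIn (𝔞 : Submodule K M) (g : Module.Dual K M) : Submodule K M where
  carrier := {X | X ∈ 𝔞 ∧ ∀ Y ∈ 𝔞, g ⁅X, Y⁆ = 0}
  add_mem' := by
    rintro a b ⟨ha, ha'⟩ ⟨hb, hb'⟩
    exact ⟨𝔞.add_mem ha hb, fun Y hY => by
      rw [add_lie, map_add, ha' Y hY, hb' Y hY, add_zero]⟩
  zero_mem' := ⟨𝔞.zero_mem, fun Y _ => by rw [zero_lie, map_zero]⟩
  smul_mem' := by
    rintro c a ⟨ha, ha'⟩
    exact ⟨𝔞.smul_mem c ha, fun Y hY => by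
      rw [smul_lie, map_smul, ha' Y hY, smul_zero]⟩

end

/-- The generators `H_j` in the odd-dimensional case: `H_{p+1} = E_{2p+1,2p+1}`
(0-indexed index `p`), the others as in the even case. -/
def Hodd (j : ℕ) : Matrix (Fin (2 * p + 1)) (Fin (2 * p + 1)) K :=
  if j = p then Eij K (2 * p + 1) (2 * p) (2 * p) else Hgen K (2 * p + 1) j

/-- The generators `T_j` in the odd-dimensional case: `T_p = E_{2p+1,2p}`
(0-indexed index `p−1`), the others as in the even case. -/
def Todd (j : ℕ) : Matrix (Fin (2 * p + 1)) (Fin (2 * p + 1)) K :=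
  if j = p - 1 then Eij K (2 * p + 1) (2 * p) (2 * p - 1) else Tgen K (2 * p + 1) j

/-- The Lie algebra `𝔤 = 𝔯_𝒱` in the odd case, inside `𝔤𝔩(2p+1, K)`. -/
def rOdd : Submodule K (Matrix (Fin (2 * p + 1)) (Fin (2 * p + 1)) K) :=
  Submodule.span K
    ({M | ∃ j < p + 1, M = Hodd K p j} ∪ {M | ∃ j < p, M = Zgen K (2 * p + 1) j} ∪
      {M | ∃ j < p, M = Todd K p j})

/-!
Write `𝔫` for the span of the `Z_j` and `T_j`. All of these matrices are supported on entries
`(even row, odd column)`, so products of any two of them vanish and `𝔫` is abelian. The `H_j` are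
diagonal, and `ad H_j` acts on `Z_l` and `T_l` by the scalars `2δ_{jl}` and `δ_{jl} + δ_{j,l+1}`.
Hence for `X = Σ a_j H_j + Σ b_j Z_j + Σ c_j T_j` the form `g ⁅X, ·⁆` only pairs the `a_j` with
`𝔫` and the `b_j, c_j` with the `H_l`: pairing with the `Z_l` and with `T_p` forces `a = 0`,
pairing with `H_{p+1}` forces `c_p = 0`, and pairing with `H_1, …, H_p` expresses the `b_j`
through the `c_j`, which says exactly `X = Σ c_i W_i`. No linear independence of the generators is
needed. Finally `Σ H_j = diag(1, -1, …, -1, 1)` acts by `2` on every matrix supported on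
`(even, odd)` entries, in particular on every `W_i`.
-/

open Matrix

section
variable {R : Type*} [CommRing R] {N : ℕ}

theorem lie_diagonal_apply (d : Fin N → R) (X : Matrix (Fin N) (Fin N) R) (i k : Fin N) :
    ⁅diagonal d, X⁆ i k = (d i - d k) * X i k := by
  rw [Ring.lie_def, Matrix.sub_apply, diagonal_mul, mul_diagonal]
  ring

theorem lie_diagonal_diagonal (d e : Fin N → R) : ⁅diagonal d, diagonal e⁆ = 0 := by
  ext i k
  rw [lie_diagonal_apply, diagonal_apply]
  split_ifs with h <;> simp [h]

variable (R N) in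
def evenOddBlock : Submodule R (Matrix (Fin N) (Fin N) R) where
  carrier := {X | ∀ i k, X i k ≠ 0 → Even (i : ℕ) ∧ Odd (k : ℕ)}
  add_mem' {X Y} hX hY i k h := by
    by_cases hXik : X i k = 0
    · exact hY i k (by simpa [hXik] using h)
    · exact hX i k hXik
  zero_mem' _ _ h := absurd rfl h
  smul_mem' _ _ hX i k h := hX i k (right_ne_zero_of_mul h)

theorem mul_eq_zero_of_mem_evenOddBlock {X Y : Matrix (Fin N) (Fin N) R}
    (hX : X ∈ evenOddBlock R N) (hY : Y ∈ evenOddBlock R N) : X * Y = 0 := by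
  ext i k
  rw [mul_apply, Matrix.zero_apply]
  refine Finset.sum_eq_zero fun m _ => ?_
  by_contra h
  exact Nat.not_even_iff_odd.mpr (hX i m (left_ne_zero_of_mul h)).2
    (hY m k (right_ne_zero_of_mul h)).1

theorem lie_eq_zero_of_mem_evenOddBlock {X Y : Matrix (Fin N) (Fin N) R}
    (hX : X ∈ evenOddBlock R N) (hY : Y ∈ evenOddBlock R N) : ⁅X, Y⁆ = 0 := by
  rw [Ring.lie_def, mul_eq_zero_of_mem_evenOddBlock hX hY,
    mul_eq_zero_of_mem_evenOddBlock hY hX, sub_zero]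

theorem lie_diagonal_neg_one_pow_of_mem_evenOddBlock {X : Matrix (Fin N) (Fin N) R}
    (hX : X ∈ evenOddBlock R N) :
    ⁅diagonal fun i : Fin N => (-1 : R) ^ (i : ℕ), X⁆ = (2 : R) • X := by
  ext i k
  rw [lie_diagonal_apply, Matrix.smul_apply, smul_eq_mul]
  by_cases h : X i k = 0
  · simp [h]
  · obtain ⟨hi, hk⟩ := hX i k h
    rw [hi.neg_one_pow, hk.neg_one_pow]
    ring

end

section
variable {K : Type*} [Field K] {N : ℕ}

theorem lie_diagonal_Eij (d : ℕ → K) (a b : ℕ) :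
    ⁅diagonal fun i : Fin N => d i, Eij K N a b⁆ = (d a - d b) • Eij K N a b := by
  ext i k
  rw [lie_diagonal_apply, Matrix.smul_apply, smul_eq_mul]
  simp only [Eij, of_apply]
  split_ifs with h
  · rw [h.1, h.2]
  · simp

theorem Eij_mem_evenOddBlock {a b : ℕ} (ha : Even a) (hb : Odd b) :
    Eij K N a b ∈ evenOddBlock K N := by
  intro i k h
  simp only [Eij, of_apply, ne_eq, ite_eq_right_iff, Classical.not_imp] at h
  exact h.1.1 ▸ h.1.2 ▸ ⟨ha, hb⟩

theorem Zgen_mem_evenOddBlock (j : ℕ) : Zgen K N j ∈ evenOddBlock K N :=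
  Submodule.smul_mem _ _ (Eij_mem_evenOddBlock (even_two_mul j) (odd_two_mul_add_one j))

theorem Tgen_mem_evenOddBlock (j : ℕ) : Tgen K N j ∈ evenOddBlock K N :=
  Submodule.add_mem _ (Eij_mem_evenOddBlock (even_two_mul j) (by rw [Nat.odd_iff]; omega))
    (Eij_mem_evenOddBlock (by rw [Nat.even_iff]; omega) (odd_two_mul_add_one j))

theorem Wgen_mem_evenOddBlock (ζ τ : ℕ → K) (i : ℕ) : Wgen K N ζ τ i ∈ evenOddBlock K N :=
  sub_mem (sub_mem (Tgen_mem_evenOddBlock i) (Submodule.smul_mem _ _ (Zgen_mem_evenOddBlock i)))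
    (Submodule.smul_mem _ _ (Zgen_mem_evenOddBlock (i + 1)))

theorem Wgen_ne_zero (ζ τ : ℕ → K) {i : ℕ} (hi : 2 * i + 3 < N) : Wgen K N ζ τ i ≠ 0 := by
  intro h
  have := congr_fun (congr_fun h ⟨2 * i, by omega⟩) ⟨2 * i + 3, hi⟩
  simp [Wgen, Tgen, Zgen, Eij] at this

end

section
variable {K : Type*} [Field K] {p : ℕ}

variable (K) in
/-- The diagonal entries of `H_j`: `1` at `2j`, `-1` at `2j + 1`. For `j = p` only the entry at
`2p` lies inside the matrix, which is how `H_{p+1} = E_{2p+1,2p+1}` fits the same formula. -/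
def hWeight (j n : ℕ) : K := if n / 2 = j then (-1) ^ n else 0

theorem Hodd_eq_diagonal (j : ℕ) :
    Hodd K p j = diagonal fun i : Fin (2 * p + 1) => hWeight K j i := by
  ext i k
  have hi := i.isLt
  rw [Hodd]
  split_ifs with hj <;>
    simp only [Hgen, hWeight, Eij, diagonal_apply, Matrix.sub_apply, of_apply, Fin.ext_iff] <;>
    split_ifs <;> first | omega | simp_all [pow_succ, pow_mul]

theorem hWeight_two_mul (j m : ℕ) : hWeight K j (2 * m) = if m = j then 1 else 0 := by
  simp [hWeight, pow_mul]

theorem hWeight_two_mul_add_one (j m : ℕ) :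
    hWeight K j (2 * m + 1) = if m = j then -1 else 0 := by
  simp [hWeight, pow_succ, pow_mul, show (2 * m + 1) / 2 = m by omega]

theorem lie_Hodd_Eij (j a b : ℕ) :
    ⁅Hodd K p j, Eij K (2 * p + 1) a b⁆ =
      (hWeight K j a - hWeight K j b) • Eij K (2 * p + 1) a b := by
  rw [Hodd_eq_diagonal, lie_diagonal_Eij]

theorem lie_Hodd_Zgen (j l : ℕ) :
    ⁅Hodd K p j, Zgen K (2 * p + 1) l⁆ = (if j = l then 2 else 0 : K) • Zgen K (2 * p + 1) l := by
  rw [Zgen, lie_smul, lie_Hodd_Eij, hWeight_two_mul, hWeight_two_mul_add_one, smul_comm]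
  congr 1
  split_ifs <;> first | omega | norm_num

theorem lie_Hodd_Tgen (j l : ℕ) :
    ⁅Hodd K p j, Tgen K (2 * p + 1) l⁆ =
      ((if j = l then 1 else 0) + (if j = l + 1 then 1 else 0) : K) • Tgen K (2 * p + 1) l := by
  rw [Tgen, show 2 * l + 3 = 2 * (l + 1) + 1 by ring, show 2 * l + 2 = 2 * (l + 1) by ring,
    lie_add, lie_Hodd_Eij, lie_Hodd_Eij, hWeight_two_mul, hWeight_two_mul,
    hWeight_two_mul_add_one, hWeight_two_mul_add_one, smul_add]
  congr 2 <;> split_ifs <;> first | omega | norm_num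

theorem lie_Hodd_Hodd (j l : ℕ) : ⁅Hodd K p j, Hodd K p l⁆ = 0 := by
  rw [Hodd_eq_diagonal, Hodd_eq_diagonal, lie_diagonal_diagonal]

theorem sum_Hodd :
    ∑ j ∈ Finset.range (p + 1), Hodd K p j =
      diagonal fun i : Fin (2 * p + 1) => (-1 : K) ^ (i : ℕ) := by
  ext i k
  simp only [Hodd_eq_diagonal, Matrix.sum_apply, diagonal_apply, hWeight]
  split_ifs
  · rw [Finset.sum_ite_eq, if_pos (Finset.mem_range.mpr (by omega))]
  · exact Finset.sum_const_zero

theorem lie_sum_Hodd_Wgen (ζ τ : ℕ → K) (i : ℕ) :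
    ⁅∑ j ∈ Finset.range (p + 1), Hodd K p j, Wgen K (2 * p + 1) ζ τ i⁆ =
      (2 : K) • Wgen K (2 * p + 1) ζ τ i := by
  rw [sum_Hodd, lie_diagonal_neg_one_pow_of_mem_evenOddBlock (Wgen_mem_evenOddBlock ζ τ i)]

/-- The first summand `E_{2p-1,2p+2}` of `T_p` in the even-case formula lies outside the matrix. -/
theorem Todd_eq_Tgen (hp : 1 ≤ p) : Todd K p = Tgen K (2 * p + 1) := by
  ext j : 1
  rw [Todd]
  split_ifs with hj
  · ext i k
    simp only [Tgen, Eij, Matrix.add_apply, of_apply]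
    split_ifs <;> first | omega | simp
  · rfl

end

section
variable {K : Type*} [Field K] [CharZero K] {M : Type*} [AddCommGroup M] [Module K M]

theorem sum_smul_add_sum_smul_eq_sum_smul_sub {Z T : ℕ → M} {b c ζ τ : ℕ → K} {n : ℕ}
    (hζ : ∀ j < n + 1, ζ j ≠ 0) (hc : c n = 0) (hb₀ : 2 * b 0 * ζ 0 + c 0 * τ 0 = 0)
    (hb : ∀ m, m + 1 < n + 1 → 2 * b (m + 1) * ζ (m + 1) + c (m + 1) * τ (m + 1) + c m * τ m = 0) :
    ∑ l ∈ Finset.range (n + 1), b l • Z l + ∑ l ∈ Finset.range (n + 1), c l • T l =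
      ∑ i ∈ Finset.range n,
        c i • (T i - (τ i / (2 * ζ i)) • Z i - (τ i / (2 * ζ (i + 1))) • Z (i + 1)) := by
  have hb₀' : b 0 = -(c 0 * (τ 0 / (2 * ζ 0))) := by
    have := hζ 0 n.succ_pos
    field_simp
    linear_combination hb₀
  have hb' (m) (hm : m ∈ Finset.range n) : b (m + 1) • Z (m + 1) =
      -((c (m + 1) * (τ (m + 1) / (2 * ζ (m + 1)))) • Z (m + 1)) -
        (c m * (τ m / (2 * ζ (m + 1)))) • Z (m + 1) := by
    have := hζ (m + 1) (by simpa using hm)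
    rw [← neg_smul, ← sub_smul]
    congr 1
    field_simp
    linear_combination hb m (by simpa using hm)
  have hx : ∑ i ∈ Finset.range n, (c i * (τ i / (2 * ζ i))) • Z i =
      ∑ m ∈ Finset.range n, (c (m + 1) * (τ (m + 1) / (2 * ζ (m + 1)))) • Z (m + 1) +
        (c 0 * (τ 0 / (2 * ζ 0))) • Z 0 := by
    rw [← Finset.sum_range_succ' (fun i => (c i * (τ i / (2 * ζ i))) • Z i),
      Finset.sum_range_succ, hc, zero_mul, zero_smul, add_zero]
  rw [Finset.sum_range_succ (fun l => c l • T l), hc, zero_smul, add_zero, Finset.sum_range_succ',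
    Finset.sum_congr rfl hb', hb₀']
  simp only [smul_sub, smul_smul, Finset.sum_sub_distrib, hx, neg_smul, Finset.sum_neg_distrib]
  abel

end

section
variable {K : Type*} [Field K] {M : Type*} [LieRing M] [LieAlgebra K M]

theorem mem_stabIn_span_iff {s : Set M} {g : Dual K M} {X : M} :
    X ∈ stabIn (Submodule.span K s) g ↔ X ∈ Submodule.span K s ∧ ∀ Y ∈ s, g ⁅X, Y⁆ = 0 := by
  refine ⟨fun h => ⟨h.1, fun Y hY => h.2 Y (Submodule.subset_span hY)⟩, fun h => ⟨h.1, ?_⟩⟩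
  intro Y hY
  induction hY using Submodule.span_induction with
  | mem Y hY => exact h.2 Y hY
  | zero => rw [lie_zero, map_zero]
  | add Y Y' _ _ hY hY' => rw [lie_add, map_add, hY, hY', add_zero]
  | smul t Y _ hY => rw [lie_smul, map_smul, hY, smul_zero]

end

section
variable {K : Type*} [Field K] {p : ℕ}

theorem Hodd_mem_rOdd {j : ℕ} (hj : j < p + 1) : Hodd K p j ∈ rOdd K p :=
  Submodule.subset_span (Or.inl (Or.inl ⟨j, hj, rfl⟩))

theorem Zgen_mem_rOdd {j : ℕ} (hj : j < p) : Zgen K (2 * p + 1) j ∈ rOdd K p :=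
  Submodule.subset_span (Or.inl (Or.inr ⟨j, hj, rfl⟩))

theorem Tgen_mem_rOdd (hp : 1 ≤ p) {j : ℕ} (hj : j < p) : Tgen K (2 * p + 1) j ∈ rOdd K p :=
  Todd_eq_Tgen (K := K) hp ▸ Submodule.subset_span (Or.inr ⟨j, hj, rfl⟩)

variable (K p) in
def rOddComb (a b c : ℕ → K) : Matrix (Fin (2 * p + 1)) (Fin (2 * p + 1)) K :=
  ∑ j ∈ Finset.range (p + 1), a j • Hodd K p j + ∑ j ∈ Finset.range p, b j • Zgen K (2 * p + 1) j +
    ∑ j ∈ Finset.range p, c j • Tgen K (2 * p + 1) j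

theorem exists_rOddComb_eq (hp : 1 ≤ p) {X : Matrix (Fin (2 * p + 1)) (Fin (2 * p + 1)) K}
    (hX : X ∈ rOdd K p) : ∃ a b c, rOddComb K p a b c = X := by
  rw [rOdd, Todd_eq_Tgen (K := K) hp] at hX
  induction hX using Submodule.span_induction with
  | mem X hX =>
    rcases hX with (⟨l, hl, rfl⟩ | ⟨l, hl, rfl⟩) | ⟨l, hl, rfl⟩
    · exact ⟨fun j => if j = l then 1 else 0, 0, 0, by simp [rOddComb, ite_smul, hl]⟩
    · exact ⟨0, fun j => if j = l then 1 else 0, 0, by simp [rOddComb, ite_smul, hl]⟩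
    · exact ⟨0, 0, fun j => if j = l then 1 else 0, by simp [rOddComb, ite_smul, hl]⟩
  | zero => exact ⟨0, 0, 0, by simp [rOddComb]⟩
  | add X Y _ _ hX hY =>
    obtain ⟨a, b, c, rfl⟩ := hX
    obtain ⟨a', b', c', rfl⟩ := hY
    refine ⟨a + a', b + b', c + c', ?_⟩
    simp only [rOddComb, Pi.add_apply, add_smul, Finset.sum_add_distrib]
    abel
  | smul t X _ hX =>
    obtain ⟨a, b, c, rfl⟩ := hX
    exact ⟨t • a, t • b, t • c, by simp [rOddComb, mul_smul, Finset.smul_sum]⟩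

variable (g : Dual K (Matrix (Fin (2 * p + 1)) (Fin (2 * p + 1)) K)) (a b c : ℕ → K)

theorem apply_lie_rOddComb (Y : Matrix (Fin (2 * p + 1)) (Fin (2 * p + 1)) K) :
    g ⁅rOddComb K p a b c, Y⁆ =
      ∑ j ∈ Finset.range (p + 1), a j * g ⁅Hodd K p j, Y⁆ +
        ∑ j ∈ Finset.range p, b j * g ⁅Zgen K (2 * p + 1) j, Y⁆ +
        ∑ j ∈ Finset.range p, c j * g ⁅Tgen K (2 * p + 1) j, Y⁆ := by
  simp only [rOddComb, add_lie, sum_lie, smul_lie, map_add, map_sum, map_smul, smul_eq_mul]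

theorem apply_lie_rOddComb_Zgen {l : ℕ} (hl : l < p) :
    g ⁅rOddComb K p a b c, Zgen K (2 * p + 1) l⁆ = 2 * a l * g (Zgen K (2 * p + 1) l) := by
  simp only [apply_lie_rOddComb, lie_Hodd_Zgen, map_smul, smul_eq_mul,
    lie_eq_zero_of_mem_evenOddBlock (Zgen_mem_evenOddBlock _) (Zgen_mem_evenOddBlock _),
    lie_eq_zero_of_mem_evenOddBlock (Tgen_mem_evenOddBlock _) (Zgen_mem_evenOddBlock _),
    map_zero, mul_zero, Finset.sum_const_zero, add_zero, ite_mul, zero_mul, mul_ite,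
    Finset.sum_ite_eq', Finset.mem_range, Order.lt_add_one_iff, hl.le, ↓reduceIte]
  ring

theorem apply_lie_rOddComb_Tgen {l : ℕ} (hl : l < p) :
    g ⁅rOddComb K p a b c, Tgen K (2 * p + 1) l⁆ =
      (a l + a (l + 1)) * g (Tgen K (2 * p + 1) l) := by
  simp only [apply_lie_rOddComb, lie_Hodd_Tgen, map_smul, smul_eq_mul,
    lie_eq_zero_of_mem_evenOddBlock (Zgen_mem_evenOddBlock _) (Tgen_mem_evenOddBlock _),
    lie_eq_zero_of_mem_evenOddBlock (Tgen_mem_evenOddBlock _) (Tgen_mem_evenOddBlock _),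
    map_zero, mul_zero, Finset.sum_const_zero, add_zero]
  simp [hl.le, Nat.succ_le_of_lt hl, add_mul, mul_add, Finset.sum_add_distrib]

theorem apply_lie_rOddComb_Hodd (l : ℕ) :
    g ⁅rOddComb K p a b c, Hodd K p l⁆ =
      -∑ j ∈ Finset.range p, ((if l = j then 2 else 0) * b j * g (Zgen K (2 * p + 1) j) +
        ((if l = j then 1 else 0) + (if l = j + 1 then 1 else 0)) * c j *
          g (Tgen K (2 * p + 1) j)) := by
  have hZ (j : ℕ) : ⁅Zgen K (2 * p + 1) j, Hodd K p l⁆ =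
      -((if l = j then 2 else 0 : K) • Zgen K (2 * p + 1) j) := by
    rw [← lie_skew, lie_Hodd_Zgen]
  have hT (j : ℕ) : ⁅Tgen K (2 * p + 1) j, Hodd K p l⁆ =
      -(((if l = j then 1 else 0) + (if l = j + 1 then 1 else 0) : K) • Tgen K (2 * p + 1) j) := by
    rw [← lie_skew, lie_Hodd_Tgen]
  simp only [apply_lie_rOddComb, lie_Hodd_Hodd, hZ, hT, map_zero, map_neg, map_smul, smul_eq_mul,
    mul_zero, Finset.sum_const_zero, zero_add]
  rw [← Finset.sum_add_distrib, ← Finset.sum_neg_distrib]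
  exact Finset.sum_congr rfl fun j _ => by ring

variable {g a b c} {ζ τ : ℕ → K} [CharZero K]

theorem rOddComb_coeffs_of_mem_stabIn (hp : 1 ≤ p) (hZ : ∀ j < p, g (Zgen K (2 * p + 1) j) = ζ j)
    (hT : ∀ j < p, g (Tgen K (2 * p + 1) j) = τ j) (hζ : ∀ j < p, ζ j ≠ 0) (hτ : τ (p - 1) ≠ 0)
    (hX : rOddComb K p a b c ∈ stabIn (rOdd K p) g) :
    (∀ j < p + 1, a j = 0) ∧ c (p - 1) = 0 ∧ 2 * b 0 * ζ 0 + c 0 * τ 0 = 0 ∧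
      ∀ m, m + 1 < p → 2 * b (m + 1) * ζ (m + 1) + c (m + 1) * τ (m + 1) + c m * τ m = 0 := by
  obtain ⟨n, rfl⟩ : ∃ n, p = n + 1 := ⟨p - 1, by omega⟩
  rw [Nat.add_sub_cancel] at hτ ⊢
  have ha (l) (hl : l < n + 1) : a l = 0 := by
    have h := hX.2 _ (Zgen_mem_rOdd hl)
    rw [apply_lie_rOddComb_Zgen _ _ _ _ hl, hZ l hl] at h
    simpa [hζ l hl] using h
  have hHn := hX.2 _ (Hodd_mem_rOdd (Nat.lt_succ_self (n + 1)))
  have hH₀ := hX.2 _ (Hodd_mem_rOdd (Nat.succ_pos (n + 1)))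
  simp only [apply_lie_rOddComb_Hodd, ite_mul, zero_mul, Nat.add_right_cancel_iff, add_mul,
    one_mul, Finset.sum_add_distrib, Finset.sum_ite_eq, Finset.mem_range, lt_self_iff_false,
    ↓reduceIte, lt_add_iff_pos_right, Order.lt_one_iff, hT, zero_add, neg_eq_zero, mul_eq_zero,
    Nat.right_eq_add, Nat.add_eq_zero_iff, one_ne_zero, and_false, add_zero, lt_add_iff_pos_left,
    Order.lt_add_one_iff, zero_le, hZ, neg_add_rev] at hHn hH₀
  refine ⟨fun l hl => ?_, by simpa [hτ] using hHn, by linear_combination -hH₀, fun m hm => ?_⟩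
  · rcases Nat.lt_succ_iff_lt_or_eq.mp hl with hl | rfl
    · exact ha l hl
    · have h := hX.2 _ (Tgen_mem_rOdd hp (Nat.lt_succ_self n))
      rw [apply_lie_rOddComb_Tgen _ _ _ _ (Nat.lt_succ_self n), hT n (Nat.lt_succ_self n),
        ha n (Nat.lt_succ_self n), zero_add] at h
      simpa [hτ] using h
  · have h := hX.2 _ (Hodd_mem_rOdd (show m + 1 < n + 1 + 1 by omega))
    simp only [apply_lie_rOddComb_Hodd, ite_mul, zero_mul, Nat.add_right_cancel_iff, add_mul,
      one_mul, Finset.sum_add_distrib, Finset.sum_ite_eq, Finset.mem_range, Order.lt_add_one_iff,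
      Order.add_one_le_iff, show m < n by omega, ↓reduceIte, hZ, hT, show m < n + 1 by omega,
      neg_add_rev] at h
    linear_combination -h

theorem rOddComb_eq_sum_Wgen (hp : 1 ≤ p) (hζ : ∀ j < p, ζ j ≠ 0) (ha : ∀ j < p + 1, a j = 0)
    (hc : c (p - 1) = 0) (hb₀ : 2 * b 0 * ζ 0 + c 0 * τ 0 = 0)
    (hb : ∀ m, m + 1 < p → 2 * b (m + 1) * ζ (m + 1) + c (m + 1) * τ (m + 1) + c m * τ m = 0) :
    rOddComb K p a b c = ∑ i ∈ Finset.range (p - 1), c i • Wgen K (2 * p + 1) ζ τ i := by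
  obtain ⟨n, rfl⟩ : ∃ n, p = n + 1 := ⟨p - 1, by omega⟩
  rw [Nat.add_sub_cancel] at hc ⊢
  rw [rOddComb, Finset.sum_eq_zero fun j hj => by rw [ha j (Finset.mem_range.1 hj), zero_smul],
    zero_add]
  exact sum_smul_add_sum_smul_eq_sum_smul_sub hζ hc hb₀ hb

theorem Wgen_mem_stabIn (hp : 1 ≤ p) (hZ : ∀ j < p, g (Zgen K (2 * p + 1) j) = ζ j)
    (hT : ∀ j < p, g (Tgen K (2 * p + 1) j) = τ j) (hζ : ∀ j < p, ζ j ≠ 0) {i : ℕ}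
    (hi : i + 1 < p) : Wgen K (2 * p + 1) ζ τ i ∈ stabIn (rOdd K p) g := by
  refine mem_stabIn_span_iff.2 ⟨?_, ?_⟩
  · exact sub_mem (sub_mem (Tgen_mem_rOdd hp (by omega))
      (Submodule.smul_mem _ _ (Zgen_mem_rOdd (by omega))))
      (Submodule.smul_mem _ _ (Zgen_mem_rOdd hi))
  rintro Y ((⟨l, -, rfl⟩ | ⟨l, -, rfl⟩) | ⟨l, -, rfl⟩)
  · rw [← lie_skew, map_neg, neg_eq_zero, Wgen, lie_sub, lie_sub, lie_smul, lie_smul,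
      lie_Hodd_Tgen, lie_Hodd_Zgen, lie_Hodd_Zgen]
    simp only [map_sub, map_smul, smul_eq_mul, hT i (by omega), hZ i (by omega), hZ (i + 1) hi]
    have := hζ i (by omega)
    have := hζ (i + 1) hi
    split_ifs <;> first | omega | (field_simp; ring)
  · rw [lie_eq_zero_of_mem_evenOddBlock (Wgen_mem_evenOddBlock ζ τ i) (Zgen_mem_evenOddBlock l),
      map_zero]
  · rw [Todd_eq_Tgen hp,
      lie_eq_zero_of_mem_evenOddBlock (Wgen_mem_evenOddBlock ζ τ i) (Tgen_mem_evenOddBlock l),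
      map_zero]

theorem stabIn_rOdd_eq_span_Wgen (hp : 1 ≤ p) (hZ : ∀ j < p, g (Zgen K (2 * p + 1) j) = ζ j)
    (hT : ∀ j < p, g (Tgen K (2 * p + 1) j) = τ j) (hζ : ∀ j < p, ζ j ≠ 0) (hτ : τ (p - 1) ≠ 0) :
    stabIn (rOdd K p) g = Submodule.span K {M | ∃ i < p - 1, M = Wgen K (2 * p + 1) ζ τ i} := by
  refine le_antisymm (fun X hX => ?_) (Submodule.span_le.2 ?_)
  · obtain ⟨a, b, c, rfl⟩ := exists_rOddComb_eq hp hX.1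
    obtain ⟨ha, hc, hb₀, hb⟩ := rOddComb_coeffs_of_mem_stabIn hp hZ hT hζ hτ hX
    rw [rOddComb_eq_sum_Wgen hp hζ ha hc hb₀ hb]
    exact Submodule.sum_mem _ fun i hi =>
      Submodule.smul_mem _ _ (Submodule.subset_span ⟨i, Finset.mem_range.1 hi, rfl⟩)
  · rintro _ ⟨i, hi, rfl⟩
    exact Wgen_mem_stabIn hp hZ hT hζ (by omega)

end

theorem not_stable_odd_case (hp : 2 ≤ p)
    (g : Module.Dual K (Matrix (Fin (2 * p + 1)) (Fin (2 * p + 1)) K)) (ζ τ : ℕ → K)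
    (hZ : ∀ j < p, g (Zgen K (2 * p + 1) j) = ζ j) (hζ : ∀ j < p, ζ j ≠ 0)
    (hT : ∀ j < p, g (Todd K p j) = τ j) (hτ : τ (p - 1) ≠ 0) :
    stabIn (rOdd K p) g =
        Submodule.span K {M | ∃ i < p - 1, M = Wgen K (2 * p + 1) ζ τ i} ∧
      (∀ i < p - 1,
        ⁅∑ j ∈ Finset.range (p + 1), Hodd K p j, Wgen K (2 * p + 1) ζ τ i⁆ =
          (2 : K) • Wgen K (2 * p + 1) ζ τ i) ∧
      Submodule.span K
          {M | ∃ X ∈ rOdd K p, ∃ Y ∈ stabIn (rOdd K p) g, M = ⁅X, Y⁆} ⊓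
        stabIn (rOdd K p) g ≠ ⊥ := by
  have hp₁ : 1 ≤ p := by omega
  rw [Todd_eq_Tgen hp₁] at hT
  refine ⟨stabIn_rOdd_eq_span_Wgen hp₁ hZ hT hζ hτ, fun i _ => lie_sum_Hodd_Wgen ζ τ i, ?_⟩
  have hW₀ := Wgen_mem_stabIn hp₁ hZ hT hζ (i := 0) (by omega)
  have hH : ∑ j ∈ Finset.range (p + 1), Hodd K p j ∈ rOdd K p :=
    Submodule.sum_mem _ fun j hj => Hodd_mem_rOdd (Finset.mem_range.1 hj)
  refine (Submodule.ne_bot_iff _).2 ⟨(2 : K) • Wgen K (2 * p + 1) ζ τ 0, ?_, ?_⟩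
  · exact Submodule.mem_inf.2
      ⟨Submodule.subset_span ⟨_, hH, _, hW₀, (lie_sum_Hodd_Wgen ζ τ 0).symm⟩,
        Submodule.smul_mem _ _ hW₀⟩
  · exact smul_ne_zero two_ne_zero (Wgen_ne_zero ζ τ (by omega))

end Paper
end
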